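/- arXiv:1307.1854 — 4 statements merged into one kernel-verified Lean document; each statement's English description precedes it below -/
import Mathlib

section
/- Let π be a root of the power series ∑_{j≥0} t^{p^j}/p^j with ord_p(π) = 1/(p−1), and for i ≥ 1 define γ_i := π^{−1} ∑_{j=0}^{i} π^{p^j}/p^j (and γ_0 := 1). Then γ_i = −π^{−1} ∑_{j=i+1}^{∞} π^{p^j}/p^j, and consequently ord_p(γ_i) = (p^{i+1}−1)/(p−1) − (i+1) for every i ≥ 0. -/
/-!
Subtracting the partial sums from `∑ π^{p^j}/p^j = 0` gives the tail expression for `π γ_i`.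
Since `ord_p(π^{p^j}/p^j) = p^j/(p-1) - j` increases by `p^j - 1` from `j` to `j + 1`, the term
`j = i + 1` of the tail is strictly larger in norm than all the others, so in the ultrametric
field it alone determines the norm of the tail.
-/

open Finset

namespace IsUltrametricDist

theorem norm_eq_norm_zero_of_hasSum {E : Type*} [NormedAddCommGroup E] [IsUltrametricDist E]
    {f : ℕ → E} {s : E} {C : ℝ} (hf : HasSum f s) (htail : ∀ n, ‖f (n + 1)‖ ≤ C)
    (hC : C < ‖f 0‖) : ‖s‖ = ‖f 0‖ := by
  have hrest : ‖∑' n, f (n + 1)‖ < ‖f 0‖ := (norm_tsum_le_of_forall_le htail).trans_lt hC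
  rw [← hf.tsum_eq, hf.summable.tsum_eq_zero_add,
    norm_add_eq_max_of_norm_ne_norm hrest.ne', max_eq_left hrest.le]

end IsUltrametricDist

theorem HasSum.nat_add_neg_sum_range {G : Type*} [AddCommGroup G] [TopologicalSpace G]
    [IsTopologicalAddGroup G] {f : ℕ → G} (hf : HasSum f 0) (k : ℕ) :
    HasSum (fun j => f (k + j)) (-∑ j ∈ range k, f j) := by
  simpa [add_comm] using (hasSum_nat_add_iff' k).mpr hf

section PowDivSub

variable {p : ℝ}

theorem pow_div_sub_succ (hp : p ≠ 1) (j : ℕ) :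
    p ^ (j + 1) / (p - 1) - ((j + 1 : ℕ) : ℝ) = p ^ j / (p - 1) - j + (p ^ j - 1) := by
  have : p - 1 ≠ 0 := sub_ne_zero.mpr hp
  field_simp
  push_cast
  ring

theorem monotone_pow_div_sub (hp : 1 < p) : Monotone fun j : ℕ => p ^ j / (p - 1) - j :=
  monotone_nat_of_le_succ fun j => by
    rw [pow_div_sub_succ hp.ne']
    linarith [one_le_pow₀ (n := j) hp.le]

theorem pow_div_sub_lt_succ (hp : 1 < p) {j : ℕ} (hj : 1 ≤ j) :
    p ^ j / (p - 1) - j < p ^ (j + 1) / (p - 1) - ((j + 1 : ℕ) : ℝ) := by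
  rw [pow_div_sub_succ hp.ne']
  linarith [one_lt_pow₀ hp (by omega : j ≠ 0)]

end PowDivSub

section DworkTerms

variable {K : Type*} [NormedField K] {p : ℕ} {π : K}

theorem norm_natCast_ne_zero_of_neg_logb (hordp : -Real.logb p ‖(p : K)‖ = 1) :
    ‖(p : K)‖ ≠ 0 := by
  intro h
  simp [h] at hordp

theorem neg_logb_norm_pow_div_pow (hπ0 : π ≠ 0) (hordp : -Real.logb p ‖(p : K)‖ = 1)
    (hordπ : -Real.logb p ‖π‖ = 1 / ((p : ℝ) - 1)) (j : ℕ) :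
    -Real.logb p ‖π ^ (p ^ j) / (p : K) ^ j‖ = (p : ℝ) ^ j / ((p : ℝ) - 1) - j := by
  rw [norm_div, norm_pow, norm_pow, Real.logb_div (pow_ne_zero _ (norm_ne_zero_iff.mpr hπ0))
    (pow_ne_zero _ (norm_natCast_ne_zero_of_neg_logb hordp)), Real.logb_pow, Real.logb_pow]
  push_cast
  linear_combination (p : ℝ) ^ j * hordπ - (j : ℝ) * hordp

theorem norm_pow_div_pow_pos (hπ0 : π ≠ 0) (hordp : -Real.logb p ‖(p : K)‖ = 1) (j : ℕ) :
    0 < ‖π ^ (p ^ j) / (p : K) ^ j‖ :=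
  norm_pos_iff.mpr <| div_ne_zero (pow_ne_zero _ hπ0)
    (pow_ne_zero _ (norm_ne_zero_iff.mp (norm_natCast_ne_zero_of_neg_logb hordp)))

theorem norm_pow_div_pow_le_iff (hp : 1 < (p : ℝ)) (hπ0 : π ≠ 0)
    (hordp : -Real.logb p ‖(p : K)‖ = 1) (hordπ : -Real.logb p ‖π‖ = 1 / ((p : ℝ) - 1))
    (j k : ℕ) :
    ‖π ^ (p ^ k) / (p : K) ^ k‖ ≤ ‖π ^ (p ^ j) / (p : K) ^ j‖ ↔
      (p : ℝ) ^ j / ((p : ℝ) - 1) - j ≤ (p : ℝ) ^ k / ((p : ℝ) - 1) - k := by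
  rw [← neg_logb_norm_pow_div_pow hπ0 hordp hordπ, ← neg_logb_norm_pow_div_pow hπ0 hordp hordπ,
    neg_le_neg_iff, Real.logb_le_logb hp (norm_pow_div_pow_pos hπ0 hordp _)
      (norm_pow_div_pow_pos hπ0 hordp _)]

theorem norm_pow_div_pow_lt_iff (hp : 1 < (p : ℝ)) (hπ0 : π ≠ 0)
    (hordp : -Real.logb p ‖(p : K)‖ = 1) (hordπ : -Real.logb p ‖π‖ = 1 / ((p : ℝ) - 1))
    (j k : ℕ) :
    ‖π ^ (p ^ k) / (p : K) ^ k‖ < ‖π ^ (p ^ j) / (p : K) ^ j‖ ↔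
      (p : ℝ) ^ j / ((p : ℝ) - 1) - j < (p : ℝ) ^ k / ((p : ℝ) - 1) - k := by
  rw [← neg_logb_norm_pow_div_pow hπ0 hordp hordπ, ← neg_logb_norm_pow_div_pow hπ0 hordp hordπ,
    neg_lt_neg_iff, Real.logb_lt_logb_iff hp (norm_pow_div_pow_pos hπ0 hordp _)
      (norm_pow_div_pow_pos hπ0 hordp _)]

end DworkTerms

/-- the two expressions for Dwork's `γ_i` agree and its valuation is
`(p^{i+1}-1)/(p-1) - (i+1)`.  Here `ord_p x = -log_p ‖x‖` in a nonarchimedean normed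
field `K`, `π` is a zero of `∑_j t^{p^j}/p^j` with `ord_p π = 1/(p-1)`. -/
theorem stmt0 {K : Type*} [NormedField K] [IsUltrametricDist K]
    (p : ℕ) (hp : p.Prime) (π : K) (hπ0 : π ≠ 0)
    (hzero : HasSum (fun j : ℕ => π ^ (p ^ j) / ((p : K) ^ j)) 0)
    (hordp : -Real.logb p ‖(p : K)‖ = 1)
    (hordπ : -Real.logb p ‖π‖ = 1 / ((p : ℝ) - 1))
    (γ : ℕ → K) (hγ0 : γ 0 = 1)
    (hγ : ∀ i : ℕ, 1 ≤ i →
      γ i = π⁻¹ * ∑ j ∈ Finset.range (i + 1), π ^ (p ^ j) / ((p : K) ^ j)) :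
    ∀ i : ℕ,
      HasSum (fun j : ℕ => π ^ (p ^ (i + 1 + j)) / ((p : K) ^ (i + 1 + j))) (-(π * γ i)) ∧
      -Real.logb p ‖γ i‖ = ((p : ℝ) ^ (i + 1) - 1) / ((p : ℝ) - 1) - (i + 1) := by
  intro i
  have hp1 : 1 < (p : ℝ) := by exact_mod_cast hp.one_lt
  have hπγ : π * γ i = ∑ j ∈ range (i + 1), π ^ (p ^ j) / (p : K) ^ j := by
    rcases Nat.eq_zero_or_pos i with rfl | hi
    · simp [hγ0]
    · rw [hγ i hi, ← mul_assoc, mul_inv_cancel₀ hπ0, one_mul]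
  have htail := hπγ ▸ hzero.nat_add_neg_sum_range (i + 1)
  refine ⟨htail, ?_⟩
  have hnorm : ‖π * γ i‖ = ‖π ^ (p ^ (i + 1)) / (p : K) ^ (i + 1)‖ := by
    rw [← norm_neg]
    refine IsUltrametricDist.norm_eq_norm_zero_of_hasSum htail (fun n => ?_)
      ((norm_pow_div_pow_lt_iff hp1 hπ0 hordp hordπ _ _).mpr (pow_div_sub_lt_succ hp1 (by omega)))
    exact (norm_pow_div_pow_le_iff hp1 hπ0 hordp hordπ _ _).mpr
      (monotone_pow_div_sub hp1 (by omega))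
  have hγnorm : ‖γ i‖ = ‖π ^ (p ^ (i + 1)) / (p : K) ^ (i + 1)‖ / ‖π‖ := by
    rw [← hnorm, norm_mul, mul_div_cancel_left₀ _ (norm_ne_zero_iff.mpr hπ0)]
  rw [hγnorm, Real.logb_div (norm_pow_div_pow_pos hπ0 hordp _).ne' (norm_ne_zero_iff.mpr hπ0),
    neg_sub', neg_logb_norm_pow_div_pow hπ0 hordp hordπ]
  push_cast
  linear_combination -hordπ
end

section
/- Let σ be a convex polytope in ℝ^n of dimension n−1 lying in the affine hyperplane l_σ(x) = 1 (with l_σ a linear form), let C = Cone(σ ∪ {0}) be the cone over σ, and let μ ∈ ℝ^n with l_σ(μ) < 1 and μ ∉ C. Suppose τ is a codimension-two face of σ whose linear span together with 0 is the hyperplane φ(x) = 0, where φ is a linear form normalized so that φ ≥ 0 on C. If φ(μ) < 0, then for every point x₀ in the convex hull of σ ∪ {0} one has l_{(τ,μ)}(x₀) ≤ 1, where l_{(τ,μ)}(x) := l_σ(x) + (1 − l_σ(μ)) φ(x)/φ(μ); moreover the inequality is strict when x₀ ∉ τ. -/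
/-- visibility computation.  `σ ⊂ {l_σ = 1}` convex, `φ ≥ 0` on `σ`
(equivalently on the cone `C` over `σ`), `l_σ(μ) < 1`, `μ ∉ C`, `φ(μ) < 0`,
`τ = {x ∈ σ | φ x = 0}`.  Then `l_{(τ,μ)}(x₀) ≤ 1` on `conv(σ ∪ {0})`, strictly
outside `τ`. -/
theorem stmt3 {n : ℕ} (lσ φ : (Fin n → ℝ) →ₗ[ℝ] ℝ) (σ : Set (Fin n → ℝ))
    (hconv : Convex ℝ σ) (hσ : ∀ x ∈ σ, lσ x = 1) (hφσ : ∀ x ∈ σ, 0 ≤ φ x)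
    (μ : Fin n → ℝ) (hμlt : lσ μ < 1)
    (hμC : μ ∉ {x | ∃ c : ℝ, 0 ≤ c ∧ ∃ s ∈ σ, x = c • s})
    (hφμ : φ μ < 0) :
    ∀ x₀ ∈ convexHull ℝ (σ ∪ {0}),
      lσ x₀ + (1 - lσ μ) * (φ x₀ / φ μ) ≤ 1 ∧
      (x₀ ∉ {x ∈ σ | φ x = 0} → lσ x₀ + (1 - lσ μ) * (φ x₀ / φ μ) < 1) := by
  intro x₀ hx₀
  have h1μ : 0 < 1 - lσ μ := by linarith
  by_cases hne : σ.Nonempty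
  · rw [Set.union_singleton, convexHull_insert hne, hconv.convexHull_eq] at hx₀
    obtain ⟨z0, hz0, hseg0⟩ := Set.mem_iUnion₂.mp hx₀
    rw [Set.mem_singleton_iff] at hz0
    subst hz0
    obtain ⟨z, hz, hseg⟩ := Set.mem_iUnion₂.mp hseg0
    rw [segment_eq_image] at hseg
    obtain ⟨c, hc, hx⟩ := hseg
    have hx' : x₀ = c • z := by
      rw [← hx]; simp
    have hlz : lσ z = 1 := hσ z hz
    have hφz : 0 ≤ φ z := hφσ z hz
    have hl : lσ x₀ = c := by rw [hx']; simp [hlz]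
    have hφ : φ x₀ = c * φ z := by rw [hx']; simp
    have hφ0 : 0 ≤ φ x₀ := by rw [hφ]; exact mul_nonneg hc.1 hφz
    have hdiv : φ x₀ / φ μ ≤ 0 := div_nonpos_of_nonneg_of_nonpos hφ0 hφμ.le
    have hterm : (1 - lσ μ) * (φ x₀ / φ μ) ≤ 0 :=
      mul_nonpos_of_nonneg_of_nonpos h1μ.le hdiv
    constructor
    · rw [hl]; nlinarith [hc.2]
    · intro hτ
      rcases lt_or_eq_of_le hc.2 with hclt | hceq
      · rw [hl]; linarith
      · subst hceq
        have hx₀σ : x₀ ∈ σ := by rw [hx', one_smul]; exact hz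
        have hφne : φ x₀ ≠ 0 := fun h => hτ ⟨hx₀σ, h⟩
        have hφpos : 0 < φ x₀ := lt_of_le_of_ne hφ0 (Ne.symm hφne)
        have : φ x₀ / φ μ < 0 := div_neg_of_pos_of_neg hφpos hφμ
        have : (1 - lσ μ) * (φ x₀ / φ μ) < 0 := mul_neg_of_pos_of_neg h1μ this
        rw [hl]; linarith
  · rw [Set.not_nonempty_iff_eq_empty] at hne
    subst hne
    simp only [Set.empty_union, convexHull_singleton, Set.mem_singleton_iff] at hx₀
    subst hx₀
    simp
end

section
/- Let w be the polyhedral weight function on the cone Cone(f̄, μ) determined by the polytope Δ_∞(f̄, μ) (i.e., w(v) is the least b ≥ 0 with v ∈ b·Δ_∞(f̄, μ)). Then for v in the subcone Cone(τ, μ) one has w(v) = l_{(τ,μ)}(v) = l_σ(v) + (1 − l_σ(μ)) φ^{(τ)}(v)/φ^{(τ)}(μ), and for v ∈ Cone(f̄) one has w(v) = l_σ(v). Equivalently, w(v) = l_σ(v) + m(v)(1 − l_σ(μ)) for all v in the cone. -/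
open Pointwise

/-- The cone over a set: all nonnegative multiples of its points. -/
def coneOver {V : Type*} [AddCommMonoid V] [Module ℝ V] (A : Set V) : Set V :=
  {x | ∃ c : ℝ, 0 ≤ c ∧ ∃ y ∈ A, x = c • y}

/-- The polyhedral weight of `v` determined by a polytope `Δ`: the least `b ≥ 0`
with `v ∈ b • Δ`. -/
noncomputable def polyWeight {V : Type*} [AddCommMonoid V] [Module ℝ V]
    (Δ : Set V) (v : V) : ℝ :=
  sInf {b : ℝ | 0 ≤ b ∧ v ∈ b • Δ}

/-! A linear form `L` with `L ≤ 1` on `Δ` bounds the weight from below, since `v ∈ b • Δ`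
forces `L v ≤ b`; on the cone over a face `{L = 1}` of `Δ` the bound is attained, so the
weight equals `L` there. For `Cone(f̄)` take `L = l_σ`; for `Cone(τ, μ)` take `l_{(τ,μ)}`,
which is `1` on `τ` and at `μ`, and at most `l_σ = 1` on `σ` because `φ^{(τ)} ≥ 0` on `σ`
while `φ^{(τ)}(μ) < 0`. -/

section PolyWeight

variable {V : Type*} [AddCommGroup V] [Module ℝ V]

lemma polyWeight_smul_eq {Δ : Set V} (L : V →ₗ[ℝ] ℝ) (hΔ : ∀ x ∈ Δ, L x ≤ 1)
    {y : V} (hy : y ∈ Δ) (hLy : L y = 1) {c : ℝ} (hc : 0 ≤ c) :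
    polyWeight Δ (c • y) = c := by
  have hmem : c ∈ {b : ℝ | 0 ≤ b ∧ c • y ∈ b • Δ} := ⟨hc, Set.smul_mem_smul_set hy⟩
  refine le_antisymm (csInf_le ⟨0, fun b hb => hb.1⟩ hmem) (le_csInf ⟨c, hmem⟩ ?_)
  rintro b ⟨hb, x, hx, hbx⟩
  calc c = L (c • y) := by rw [map_smul, hLy, smul_eq_mul, mul_one]
    _ = b * L x := by rw [← hbx, map_smul, smul_eq_mul]
    _ ≤ b * 1 := mul_le_mul_of_nonneg_left (hΔ x hx) hb
    _ = b := mul_one b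

lemma polyWeight_convexHull_eq_of_mem_coneOver {T A : Set V} (L : V →ₗ[ℝ] ℝ)
    (hT : ∀ x ∈ T, L x ≤ 1) (hAT : A ⊆ convexHull ℝ T) (hA : ∀ x ∈ A, L x = 1)
    {v : V} (hv : v ∈ coneOver (convexHull ℝ A)) :
    polyWeight (convexHull ℝ T) v = L v := by
  obtain ⟨c, hc, y, hy, rfl⟩ := hv
  have hLy : L y = 1 := convexHull_min hA (convex_hyperplane L.isLinear 1) hy
  have hyT : y ∈ convexHull ℝ T := convexHull_min hAT (convex_convexHull ℝ T) hy
  have hle : ∀ x ∈ convexHull ℝ T, L x ≤ 1 :=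
    fun x hx => convexHull_min hT (convex_halfSpace_le L.isLinear 1) hx
  rw [polyWeight_smul_eq L hle hyT hLy hc, map_smul, hLy, smul_eq_mul, mul_one]

end PolyWeight

/-- The paper's `l_{(τ,μ)}`, with `φ = φ^{(τ)}`. -/
noncomputable def chamberForm {V : Type*} [AddCommGroup V] [Module ℝ V]
    (lσ φ : V →ₗ[ℝ] ℝ) (μ : V) : V →ₗ[ℝ] ℝ :=
  lσ + ((1 - lσ μ) / φ μ) • φ

section ChamberForm

variable {V : Type*} [AddCommGroup V] [Module ℝ V] (lσ φ : V →ₗ[ℝ] ℝ) (μ : V)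

lemma chamberForm_apply (v : V) :
    chamberForm lσ φ μ v = lσ v + (1 - lσ μ) * (φ v / φ μ) := by
  simp only [chamberForm, LinearMap.add_apply, LinearMap.smul_apply, smul_eq_mul]
  ring

lemma chamberForm_apply_self (hφμ : φ μ ≠ 0) : chamberForm lσ φ μ μ = 1 := by
  rw [chamberForm_apply, div_self hφμ]
  ring

lemma chamberForm_le_of_nonneg (hμ : lσ μ ≤ 1) (hφμ : φ μ < 0) {x : V} (hx : 0 ≤ φ x) :
    chamberForm lσ φ μ x ≤ lσ x := by
  have : (1 - lσ μ) * (φ x / φ μ) ≤ 0 :=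
    mul_nonpos_of_nonneg_of_nonpos (by linarith) (div_nonpos_of_nonneg_of_nonpos hx hφμ.le)
  rw [chamberForm_apply]
  linarith

end ChamberForm

theorem stmt6_general {n : ℕ} {ι : Type*} (S : Finset (Fin n → ℝ))
    (lσ : (Fin n → ℝ) →ₗ[ℝ] ℝ) (φ : ι → ((Fin n → ℝ) →ₗ[ℝ] ℝ))
    (μ : Fin n → ℝ)
    (hS : ∀ x ∈ S, lσ x = 1) (hμlt : lσ μ < 1)
    (hφμ : ∀ i, φ i μ < 0)
    (hφpos : ∀ i, ∀ x ∈ convexHull ℝ (S : Set (Fin n → ℝ)), 0 ≤ φ i x)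
    (m : (Fin n → ℝ) → ℝ)
    (hm1 : ∀ i, ∀ v ∈ coneOver (convexHull ℝ
        ({x ∈ convexHull ℝ (S : Set (Fin n → ℝ)) | φ i x = 0} ∪ {μ})),
      m v = φ i v / φ i μ)
    (hm2 : ∀ v ∈ coneOver (convexHull ℝ (S : Set (Fin n → ℝ))), m v = 0)
    (hcover : coneOver (convexHull ℝ ((S : Set (Fin n → ℝ)) ∪ {μ})) =
      coneOver (convexHull ℝ (S : Set (Fin n → ℝ))) ∪
        ⋃ i, coneOver (convexHull ℝ
          ({x ∈ convexHull ℝ (S : Set (Fin n → ℝ)) | φ i x = 0} ∪ {μ}))) :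
    (∀ i, ∀ v ∈ coneOver (convexHull ℝ
        ({x ∈ convexHull ℝ (S : Set (Fin n → ℝ)) | φ i x = 0} ∪ {μ})),
      polyWeight (convexHull ℝ ((S : Set (Fin n → ℝ)) ∪ {0, μ})) v =
        lσ v + (1 - lσ μ) * (φ i v / φ i μ)) ∧
    (∀ v ∈ coneOver (convexHull ℝ (S : Set (Fin n → ℝ))),
      polyWeight (convexHull ℝ ((S : Set (Fin n → ℝ)) ∪ {0, μ})) v = lσ v) ∧
    (∀ v ∈ coneOver (convexHull ℝ ((S : Set (Fin n → ℝ)) ∪ {μ})),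
      polyWeight (convexHull ℝ ((S : Set (Fin n → ℝ)) ∪ {0, μ})) v =
        lσ v + m v * (1 - lσ μ)) := by
  have hSμ : convexHull ℝ (S : Set (Fin n → ℝ)) ⊆ convexHull ℝ (S ∪ {0, μ}) :=
    convexHull_mono Set.subset_union_left
  have hlσ_hull : ∀ x ∈ convexHull ℝ (S : Set (Fin n → ℝ)), lσ x = 1 :=
    fun x hx => convexHull_min hS (convex_hyperplane lσ.isLinear 1) hx
  have on_face : ∀ i, ∀ v ∈ coneOver (convexHull ℝ
      ({x ∈ convexHull ℝ (S : Set (Fin n → ℝ)) | φ i x = 0} ∪ {μ})),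
      polyWeight (convexHull ℝ ((S : Set (Fin n → ℝ)) ∪ {0, μ})) v =
        lσ v + (1 - lσ μ) * (φ i v / φ i μ) := by
    intro i v hv
    rw [← chamberForm_apply]
    refine polyWeight_convexHull_eq_of_mem_coneOver _ ?_ ?_ ?_ hv
    · rintro x (hx | rfl | hx)
      · exact (chamberForm_le_of_nonneg lσ (φ i) μ hμlt.le (hφμ i)
          (hφpos i x (subset_convexHull ℝ _ hx))).trans_eq (hS x hx)
      · simp
      · exact hx ▸ (chamberForm_apply_self lσ (φ i) μ (hφμ i).ne).le
    · rintro x (hx | hx)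
      exacts [hSμ hx.1, subset_convexHull ℝ _ (by simp [Set.mem_singleton_iff.mp hx])]
    · rintro x (⟨hx, hφx⟩ | hx)
      · rw [chamberForm_apply, hlσ_hull x hx, hφx]
        ring
      · exact hx ▸ chamberForm_apply_self lσ (φ i) μ (hφμ i).ne
  have on_base : ∀ v ∈ coneOver (convexHull ℝ (S : Set (Fin n → ℝ))),
      polyWeight (convexHull ℝ ((S : Set (Fin n → ℝ)) ∪ {0, μ})) v = lσ v := by
    refine fun v hv => polyWeight_convexHull_eq_of_mem_coneOver lσ ?_
      (subset_convexHull ℝ _ |>.trans hSμ) hS hv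
    rintro x (hx | rfl | hx)
    exacts [(hS x hx).le, by simp, hx ▸ hμlt.le]
  refine ⟨on_face, on_base, fun v hv => ?_⟩
  rcases hcover ▸ hv with hv | hv
  · rw [hm2 v hv, zero_mul, add_zero, on_base v hv]
  · obtain ⟨i, hvi⟩ := Set.mem_iUnion.mp hv
    rw [hm1 i v hvi, on_face i v hvi]
    ring

/-- explicit description of the weight function `w` of
`Δ_∞(f̄, μ) = conv(S ∪ {0, μ})` on the chambers of `Cone(f̄, μ)`:
`w = l_{(τ,μ)} = l_σ + (1 - l_σ(μ)) φ^{(τ)}/φ^{(τ)}(μ)` on `Cone(τ, μ)`,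
`w = l_σ` on `Cone(f̄)`, and equivalently `w = l_σ + m·(1 - l_σ(μ))`. -/
theorem stmt6 {n : ℕ} {ι : Type*} (S : Finset (Fin n → ℝ))
    (lσ : (Fin n → ℝ) →ₗ[ℝ] ℝ) (φ : ι → ((Fin n → ℝ) →ₗ[ℝ] ℝ))
    (μ : Fin n → ℝ)
    (hS : ∀ x ∈ S, lσ x = 1) (hμlt : lσ μ < 1)
    (hμout : μ ∉ coneOver (convexHull ℝ (S : Set (Fin n → ℝ))))
    (hφμ : ∀ i, φ i μ < 0)
    (hφpos : ∀ i, ∀ x ∈ convexHull ℝ (S : Set (Fin n → ℝ)), 0 ≤ φ i x)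
    (m : (Fin n → ℝ) → ℝ)
    (hm1 : ∀ i, ∀ v ∈ coneOver (convexHull ℝ
        ({x ∈ convexHull ℝ (S : Set (Fin n → ℝ)) | φ i x = 0} ∪ {μ})),
      m v = φ i v / φ i μ)
    (hm2 : ∀ v ∈ coneOver (convexHull ℝ (S : Set (Fin n → ℝ))), m v = 0)
    (hcover : coneOver (convexHull ℝ ((S : Set (Fin n → ℝ)) ∪ {μ})) =
      coneOver (convexHull ℝ (S : Set (Fin n → ℝ))) ∪
        ⋃ i, coneOver (convexHull ℝ
          ({x ∈ convexHull ℝ (S : Set (Fin n → ℝ)) | φ i x = 0} ∪ {μ}))) :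
    (∀ i, ∀ v ∈ coneOver (convexHull ℝ
        ({x ∈ convexHull ℝ (S : Set (Fin n → ℝ)) | φ i x = 0} ∪ {μ})),
      polyWeight (convexHull ℝ ((S : Set (Fin n → ℝ)) ∪ {0, μ})) v =
        lσ v + (1 - lσ μ) * (φ i v / φ i μ)) ∧
    (∀ v ∈ coneOver (convexHull ℝ (S : Set (Fin n → ℝ))),
      polyWeight (convexHull ℝ ((S : Set (Fin n → ℝ)) ∪ {0, μ})) v = lσ v) ∧
    (∀ v ∈ coneOver (convexHull ℝ ((S : Set (Fin n → ℝ)) ∪ {μ})),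
      polyWeight (convexHull ℝ ((S : Set (Fin n → ℝ)) ∪ {0, μ})) v =
        lσ v + m v * (1 - lσ μ)) :=
  stmt6_general S lσ φ μ hS hμlt hφμ hφpos m hm1 hm2 hcover
end

section
/- With notation as above, the extended monoid is described explicitly: M̃(F̄) := Cone(F̄, P₀) ∩ ((1/D)ℤ × ℤ^n) equals { (r, v) ∈ (1/D)ℤ_{≥0} × ℤ^n : v ∈ Cone(f̄, μ) and r ≥ m(v) }. -/
open Pointwise

section Aux
variable {V : Type*} [AddCommGroup V] [Module ℝ V]

lemma mem_coneOver' {A : Set V} {x : V} (hx : x ∈ A) : x ∈ coneOver A :=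
  ⟨1, zero_le_one, x, hx, (one_smul ℝ x).symm⟩

lemma smul_mem_coneOver' {A : Set V} {x : V} {c : ℝ} (hc : 0 ≤ c) (hx : x ∈ coneOver A) :
    c • x ∈ coneOver A := by
  obtain ⟨t, ht, y, hy, rfl⟩ := hx
  exact ⟨c * t, mul_nonneg hc ht, y, hy, (mul_smul c t y).symm⟩

lemma add_mem_coneOver' {A : Set V} (hA : Convex ℝ A) {x y : V}
    (hx : x ∈ coneOver A) (hy : y ∈ coneOver A) : x + y ∈ coneOver A := by
  obtain ⟨s, hs, p, hp, rfl⟩ := hx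
  obtain ⟨t, ht, q, hq, rfl⟩ := hy
  rcases eq_or_lt_of_le (add_nonneg hs ht) with h | h
  · have hs0 : s = 0 := by linarith
    have ht0 : t = 0 := by linarith
    subst hs0; subst ht0
    exact ⟨0, le_refl _, p, hp, by simp⟩
  · refine ⟨s + t, h.le, (s / (s + t)) • p + (t / (s + t)) • q,
      hA hp hq (div_nonneg hs h.le) (div_nonneg ht h.le) (by field_simp), ?_⟩
    rw [smul_add, smul_smul, smul_smul, mul_div_cancel₀ _ h.ne', mul_div_cancel₀ _ h.ne']

lemma convex_coneOver_convexHull' (A : Set V) : Convex ℝ (coneOver (convexHull ℝ A)) := by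
  intro x hx y hy a b ha hb _
  exact add_mem_coneOver' (convex_convexHull ℝ A) (smul_mem_coneOver' ha hx)
    (smul_mem_coneOver' hb hy)

lemma coneOver_convexHull_subset' {A K : Set V} (hK : Convex ℝ K)
    (hs : ∀ ⦃c : ℝ⦄, 0 ≤ c → ∀ ⦃x⦄, x ∈ K → c • x ∈ K) (hA : A ⊆ K) :
    coneOver (convexHull ℝ A) ⊆ K := by
  rintro x ⟨c, hc, y, hy, rfl⟩
  exact hs hc (convexHull_min hA hK hy)

lemma coneOver_mono' {A B : Set V} (h : A ⊆ B) : coneOver A ⊆ coneOver B := by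
  rintro x ⟨c, hc, y, hy, rfl⟩
  exact ⟨c, hc, y, h hy, rfl⟩

lemma nonneg_on_coneOver' {A : Set V} (L : V →ₗ[ℝ] ℝ) (h : ∀ a ∈ A, 0 ≤ L a) :
    ∀ x ∈ coneOver (convexHull ℝ A), 0 ≤ L x := by
  rintro x ⟨c, hc, y, hy, rfl⟩
  have hy' : 0 ≤ L y := convexHull_min h (convex_halfSpace_ge L.isLinear 0) hy
  rw [map_smul, smul_eq_mul]
  exact mul_nonneg hc hy'

lemma image_coneOver_convexHull' {W : Type*} [AddCommGroup W] [Module ℝ W]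
    (g : V →ₗ[ℝ] W) {A : Set V} {x : V} (hx : x ∈ coneOver (convexHull ℝ A)) :
    g x ∈ coneOver (convexHull ℝ (g '' A)) := by
  obtain ⟨c, hc, y, hy, rfl⟩ := hx
  refine ⟨c, hc, g y, ?_, (map_smul g c y)⟩
  rw [← g.image_convexHull]
  exact Set.mem_image_of_mem g hy

lemma coneOver_union_singleton' {C : Set V} {μ v : V}
    (hv : v ∈ coneOver (convexHull ℝ (C ∪ {μ}))) :
    ∃ a : ℝ, 0 ≤ a ∧ ∃ w, (w ∈ coneOver (convexHull ℝ C) ∨ w = 0) ∧ v = a • μ + w := by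
  obtain ⟨c, hc, y, hy, rfl⟩ := hv
  rcases C.eq_empty_or_nonempty with rfl | hC
  · simp only [Set.empty_union, convexHull_singleton, Set.mem_singleton_iff] at hy
    exact ⟨c, hc, 0, Or.inr rfl, by rw [hy, add_zero]⟩
  · rw [Set.union_singleton, convexHull_insert hC, mem_convexJoin] at hy
    obtain ⟨p, hp, q, hq, hseg⟩ := hy
    rw [Set.mem_singleton_iff] at hp
    subst hp
    obtain ⟨a, b, ha, hb, hab, hy⟩ := hseg
    refine ⟨c * a, mul_nonneg hc ha, (c * b) • q, Or.inl ⟨c * b, mul_nonneg hc hb, q, hq, rfl⟩, ?_⟩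
    rw [← hy, smul_add, smul_smul, smul_smul]

end Aux

/-- explicit description of the extended monoid
`M̃(F̄) = Cone(F̄, P₀) ∩ ((1/D)ℤ × ℤⁿ)
      = {(r, v) ∈ (1/D)ℤ_{≥0} × ℤⁿ : v ∈ Cone(f̄, μ), r ≥ m(v)}`.
Coordinates in `ℝ^{n+1}` are ordered `(Λ; x)`; `Supp F̄ = {(1, μ)} ∪ {0} × S`;
`P₀ = ((1 - l_σ(μ))⁻¹, 0)`; `φ i` are the forms of the codimension-two faces visible
from `μ` and `ψ j` those of the invisible ones; `m` is the piecewise-linear function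
of Statement 5. -/
theorem stmt7 {n : ℕ} {ι₁ ι₂ : Type*} (S : Finset (Fin n → ℝ))
    (lσ : (Fin n → ℝ) →ₗ[ℝ] ℝ)
    (φ : ι₁ → ((Fin n → ℝ) →ₗ[ℝ] ℝ)) (ψ : ι₂ → ((Fin n → ℝ) →ₗ[ℝ] ℝ))
    (μ : Fin n → ℝ) (D : ℕ) (hD : 0 < D)
    (hS : ∀ x ∈ S, lσ x = 1) (hμlt : lσ μ < 1)
    (hμout : μ ∉ coneOver (convexHull ℝ (S : Set (Fin n → ℝ))))
    (hφμ : ∀ i, φ i μ < 0) (hψμ : ∀ j, 0 ≤ ψ j μ)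
    (hφpos : ∀ i, ∀ x ∈ convexHull ℝ (S : Set (Fin n → ℝ)), 0 ≤ φ i x)
    (hψpos : ∀ j, ∀ x ∈ convexHull ℝ (S : Set (Fin n → ℝ)), 0 ≤ ψ j x)
    (hfacets : coneOver (convexHull ℝ (S : Set (Fin n → ℝ))) =
      {v | (∀ i, 0 ≤ φ i v) ∧ (∀ j, 0 ≤ ψ j v)})
    (m : (Fin n → ℝ) → ℝ)
    (hm1 : ∀ i, ∀ v ∈ coneOver (convexHull ℝ
        ({x ∈ convexHull ℝ (S : Set (Fin n → ℝ)) | φ i x = 0} ∪ {μ})),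
      m v = φ i v / φ i μ)
    (hm2 : ∀ v ∈ coneOver (convexHull ℝ (S : Set (Fin n → ℝ))), m v = 0)
    (hcover : coneOver (convexHull ℝ ((S : Set (Fin n → ℝ)) ∪ {μ})) =
      coneOver (convexHull ℝ (S : Set (Fin n → ℝ))) ∪
        ⋃ i, coneOver (convexHull ℝ
          ({x ∈ convexHull ℝ (S : Set (Fin n → ℝ)) | φ i x = 0} ∪ {μ})))
    (hmD : ∀ v : Fin n → ℝ, (∀ t, ∃ a : ℤ, v t = a) →
      v ∈ coneOver (convexHull ℝ ((S : Set (Fin n → ℝ)) ∪ {μ})) →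
      ∃ k : ℕ, m v = (k : ℝ) / D) :
    {z : ℝ × (Fin n → ℝ) |
        z ∈ coneOver (convexHull ℝ
          (({((1 : ℝ), μ)} ∪ (fun v => ((0 : ℝ), v)) '' (S : Set (Fin n → ℝ))) ∪
            {((0 : ℝ), (0 : Fin n → ℝ)), (((1 - lσ μ)⁻¹ : ℝ), (0 : Fin n → ℝ))})) ∧
        (∃ k : ℤ, z.1 = (k : ℝ) / D) ∧ (∀ t, ∃ a : ℤ, z.2 t = a)} =
    {z : ℝ × (Fin n → ℝ) |
        (∃ k : ℕ, z.1 = (k : ℝ) / D) ∧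
        z.2 ∈ coneOver (convexHull ℝ ((S : Set (Fin n → ℝ)) ∪ {μ})) ∧
        (∀ t, ∃ a : ℤ, z.2 t = a) ∧ m z.2 ≤ z.1} := by
  have hc0 : (0 : ℝ) < 1 - lσ μ := by linarith
  set c : ℝ := (1 - lσ μ)⁻¹ with hc_def
  have hcpos : 0 < c := inv_pos.2 hc0
  set A : Set (ℝ × (Fin n → ℝ)) :=
    (({((1 : ℝ), μ)} ∪ (fun v => ((0 : ℝ), v)) '' (S : Set (Fin n → ℝ))) ∪
      {((0 : ℝ), (0 : Fin n → ℝ)), (c, (0 : Fin n → ℝ))}) with hA_def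
  have hAelim : ∀ p ∈ A, p = ((1 : ℝ), μ) ∨ (∃ s ∈ (S : Set (Fin n → ℝ)), p = ((0 : ℝ), s)) ∨
      p = ((0 : ℝ), (0 : Fin n → ℝ)) ∨ p = (c, (0 : Fin n → ℝ)) := by
    intro p hp
    simp only [hA_def, Set.mem_union, Set.mem_singleton_iff, Set.mem_insert_iff,
      Set.mem_image] at hp
    rcases hp with (h | ⟨s, hs, h⟩) | (h | h)
    · exact Or.inl h
    · exact Or.inr (Or.inl ⟨s, hs, h.symm⟩)
    · exact Or.inr (Or.inr (Or.inl h))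
    · exact Or.inr (Or.inr (Or.inr h))
  have hμA : ((1 : ℝ), μ) ∈ A := Or.inl (Or.inl rfl)
  have h00A : ((0 : ℝ), (0 : Fin n → ℝ)) ∈ A := Or.inr (Or.inl rfl)
  have hc0A : (c, (0 : Fin n → ℝ)) ∈ A := Or.inr (Or.inr rfl)
  -- second coordinate of cone A lands in the cone over S ∪ {μ}
  ext z
  simp only [Set.mem_setOf_eq]
  constructor
  · rintro ⟨hzA, ⟨k, hk⟩, hint⟩
    -- nonnegativity of first coordinate
    have hz1 : 0 ≤ z.1 := by
      have := nonneg_on_coneOver' (A := A) (LinearMap.fst ℝ ℝ (Fin n → ℝ)) ?_ z hzA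
      · simpa using this
      · intro p hp
        rcases hAelim p hp with h | ⟨s, _, h⟩ | h | h <;> subst h <;> simp [hcpos.le]
    -- z.2 in the cone over S ∪ {μ}
    have hz2 : z.2 ∈ coneOver (convexHull ℝ ((S : Set (Fin n → ℝ)) ∪ {μ})) := by
      have himg := image_coneOver_convexHull' (LinearMap.snd ℝ ℝ (Fin n → ℝ)) hzA
      refine coneOver_convexHull_subset' (convex_coneOver_convexHull' _)
        (fun c hc x hx => smul_mem_coneOver' hc hx) ?_ himg
      rintro x ⟨p, hp, rfl⟩
      have hμmem : μ ∈ (S : Set (Fin n → ℝ)) ∪ {μ} := Or.inr rfl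
      rcases hAelim p hp with h | ⟨s, hs, h⟩ | h | h <;> subst h
      · exact mem_coneOver' (subset_convexHull ℝ _ hμmem)
      · exact mem_coneOver' (subset_convexHull ℝ _ (Or.inl hs))
      · exact ⟨0, le_refl _, μ, subset_convexHull ℝ _ hμmem, by simp⟩
      · exact ⟨0, le_refl _, μ, subset_convexHull ℝ _ hμmem, by simp⟩
    -- m z.2 ≤ z.1
    have hmle : m z.2 ≤ z.1 := by
      have hz2' := hz2
      rw [hcover] at hz2'
      rcases hz2' with h | h
      · rw [hm2 z.2 h]; exact hz1
      · rw [Set.mem_iUnion] at h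
        obtain ⟨i, hi⟩ := h
        rw [hm1 i z.2 hi]
        have hG : 0 ≤ φ i z.2 - φ i μ * z.1 := by
          have := nonneg_on_coneOver' (A := A)
            ((φ i).comp (LinearMap.snd ℝ ℝ (Fin n → ℝ)) -
              (φ i μ) • (LinearMap.fst ℝ ℝ (Fin n → ℝ))) ?_ z hzA
          · simpa [smul_eq_mul] using this
          · intro p hp
            rcases hAelim p hp with h | ⟨s, hs, h⟩ | h | h <;> subst h <;>
              simp only [LinearMap.sub_apply, LinearMap.comp_apply, LinearMap.snd_apply,
                LinearMap.smul_apply, LinearMap.fst_apply, smul_eq_mul]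
            · simp
            · have := hφpos i s (subset_convexHull ℝ _ hs)
              simpa using this
            · simp
            · have : 0 ≤ -(φ i μ) * c := mul_nonneg (by linarith [hφμ i]) hcpos.le
              simp only [map_zero]
              linarith
        rw [div_le_iff_of_neg (hφμ i)]
        linarith
    -- natural number numerator
    have hknn : 0 ≤ (k : ℝ) := by
      have hD' : (0 : ℝ) < D := by exact_mod_cast hD
      by_contra hneg
      push_neg at hneg
      have : (k : ℝ) / D < 0 := div_neg_of_neg_of_pos hneg hD'
      rw [← hk] at this
      linarith
    have hk0 : 0 ≤ k := by exact_mod_cast hknn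
    exact ⟨⟨k.toNat, by rw [hk]; congr 1; exact_mod_cast (Int.toNat_of_nonneg hk0).symm⟩,
      hz2, hint, hmle⟩
  · rintro ⟨⟨k, hk⟩, hz2, hint, hmle⟩
    refine ⟨?_, ⟨(k : ℤ), by rw [hk, Int.cast_natCast]⟩, hint⟩
    -- decompose z.2 = a • μ + w with m z.2 = a
    have hdec : ∃ a : ℝ, 0 ≤ a ∧ m z.2 = a ∧ ∃ w,
        (w ∈ coneOver (convexHull ℝ (S : Set (Fin n → ℝ))) ∨ w = 0) ∧ z.2 = a • μ + w := by
      have hz2' := hz2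
      rw [hcover] at hz2'
      rcases hz2' with h | h
      · exact ⟨0, le_refl _, hm2 z.2 h, z.2, Or.inl h, by simp⟩
      · rw [Set.mem_iUnion] at h
        obtain ⟨i, hi⟩ := h
        obtain ⟨a, ha, w, hw, hzw⟩ := coneOver_union_singleton' hi
        have hφw : φ i w = 0 := by
          rcases hw with hw | rfl
          · obtain ⟨t, ht, y, hy, rfl⟩ := hw
            have hy0 : φ i y = 0 := by
              have : y ∈ {x | φ i x = 0} :=
                convexHull_min (fun x hx => hx.2) (convex_hyperplane (φ i).isLinear 0) hy
              exact this
            rw [map_smul, hy0, smul_zero]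
          · exact map_zero _
        have hma : m z.2 = a := by
          rw [hm1 i z.2 hi, hzw, map_add, map_smul, hφw, add_zero, smul_eq_mul,
            mul_div_assoc, div_self (hφμ i).ne, mul_one]
        have hw' : w ∈ coneOver (convexHull ℝ (S : Set (Fin n → ℝ))) ∨ w = 0 := by
          rcases hw with hw | rfl
          · left
            refine coneOver_mono' ?_ hw
            exact convexHull_min (fun x hx => hx.1) (convex_convexHull ℝ _)
          · exact Or.inr rfl
        exact ⟨a, ha, hma, w, hw', hzw⟩
    obtain ⟨a, ha, hma, w, hw, hzw⟩ := hdec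
    have haz1 : a ≤ z.1 := hma ▸ hmle
    set d : ℝ := (z.1 - a) * (1 - lσ μ) with hd_def
    have hd : 0 ≤ d := mul_nonneg (by linarith) hc0.le
    have hdc : d * c = z.1 - a := by
      rw [hd_def, hc_def, mul_assoc, mul_inv_cancel₀ hc0.ne', mul_one]
    have hzeq : z = a • ((1 : ℝ), μ) + (((0 : ℝ), w) + d • (c, (0 : Fin n → ℝ))) := by
      apply Prod.ext
      · simp only [Prod.fst_add, Prod.smul_fst, smul_eq_mul]
        rw [hdc]; ring
      · simp only [Prod.snd_add, Prod.smul_snd, smul_zero, add_zero]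
        rw [hzw]
    rw [hzeq]
    have hconv := convex_convexHull ℝ A
    refine add_mem_coneOver' hconv
      (smul_mem_coneOver' ha (mem_coneOver' (subset_convexHull ℝ _ hμA)))
      (add_mem_coneOver' hconv ?_
        (smul_mem_coneOver' hd (mem_coneOver' (subset_convexHull ℝ _ hc0A))))
    rcases hw with hw | rfl
    · obtain ⟨t, ht, y, hy, rfl⟩ := hw
      refine ⟨t, ht, ((0 : ℝ), y), ?_, ?_⟩
      · have himg : ((0 : ℝ), y) ∈ convexHull ℝ ((LinearMap.inr ℝ ℝ (Fin n → ℝ)) ''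
            (S : Set (Fin n → ℝ))) := by
          rw [← (LinearMap.inr ℝ ℝ (Fin n → ℝ)).image_convexHull]
          exact ⟨y, hy, rfl⟩
        refine convexHull_mono ?_ himg
        rintro p ⟨s, hs, rfl⟩
        exact Or.inl (Or.inr ⟨s, hs, rfl⟩)
      · apply Prod.ext <;> simp
    · exact mem_coneOver' (subset_convexHull ℝ _ h00A)
end
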